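/- If a, b : ℕ → ℂ are both C-finite sequences (each satisfying some linear recurrence with constant complex coefficients), then the pointwise product sequence n ↦ a(n)·b(n) is also C-finite. -/

import Mathlib

/-!
A sequence is C-finite exactly when its shifts span a finitely generated submodule of `ℕ → ℂ`:
a recurrence of order `L` expresses every shift through the first `L` ones, and conversely
Cayley–Hamilton for the shift operator restricted to that span gives a monic polynomial
annihilating the sequence, i.e. a recurrence. The shifts of `a * b` are products of shifts of `a`
and of `b`, so they span a submodule of the product of the two spans, which is finitely generated;
as `ℂ` is Noetherian, so is that submodule.
-/

/-- A sequence is C-finite if it satisfies a homogeneous linear recurrence with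
constant complex coefficients. -/
def IsCFinite (a : ℕ → ℂ) : Prop :=
  ∃ L : ℕ, 0 < L ∧ ∃ c : ℕ → ℂ,
    ∀ n, L ≤ n → a n = ∑ i ∈ Finset.Icc 1 L, c i * a (n - i)

open Finset Polynomial

section Shift

variable {R : Type*} [CommRing R]

def seqShift : Module.End R (ℕ → R) := LinearMap.funLeft R R Nat.succ

@[simp]
lemma seqShift_pow_apply (k : ℕ) (a : ℕ → R) (n : ℕ) : (seqShift ^ k) a n = a (n + k) := by
  induction k generalizing a with
  | zero => rfl
  | succ k ih => rw [pow_succ, Module.End.mul_apply, ih]; rfl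

lemma aeval_seqShift_apply (p : R[X]) (a : ℕ → R) (n : ℕ) :
    aeval seqShift p a n = ∑ i ∈ range (p.natDegree + 1), p.coeff i * a (n + i) := by
  simp [aeval_eq_sum_range]

def shiftSpan (a : ℕ → R) : Submodule R (ℕ → R) :=
  Submodule.span R (Set.range fun k => (seqShift ^ k) a)

lemma seqShift_mem_shiftSpan {a v : ℕ → R} (hv : v ∈ shiftSpan a) :
    seqShift v ∈ shiftSpan a := by
  induction hv using Submodule.span_induction with
  | mem _ h =>
    obtain ⟨k, rfl⟩ := h
    exact Submodule.subset_span ⟨k + 1, by simp only [pow_succ', Module.End.mul_apply]⟩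
  | zero => simp
  | add _ _ _ _ hx hy => simpa using add_mem hx hy
  | smul r _ _ hx => simpa using Submodule.smul_mem _ r hx

lemma shiftSpan_mul_le (a b : ℕ → R) : shiftSpan (a * b) ≤ shiftSpan a * shiftSpan b := by
  refine Submodule.span_le.2 ?_
  rintro _ ⟨k, rfl⟩
  have hk : (seqShift ^ k) (a * b) = (seqShift ^ k) a * (seqShift ^ k) b := by
    ext n; simp
  simp only [hk]
  exact Submodule.mul_mem_mul (Submodule.subset_span ⟨k, rfl⟩) (Submodule.subset_span ⟨k, rfl⟩)

lemma exists_monic_aeval_seqShift_eq_zero {a : ℕ → R} (ha : (shiftSpan a).FG) :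
    ∃ p : R[X], p.Monic ∧ aeval seqShift p a = 0 := by
  have : Module.Finite R (shiftSpan a) := Module.Finite.iff_fg.2 ha
  obtain ⟨p, hp, hpa⟩ := LinearMap.exists_monic_and_aeval_eq_zero R
    (seqShift.restrict fun _ => seqShift_mem_shiftSpan (a := a))
  refine ⟨p, hp, ?_⟩
  have := congrArg (fun f => (f ⟨a, Submodule.subset_span ⟨0, by simp⟩⟩ : shiftSpan a)) hpa
  simpa [aeval_eq_sum_range, Module.End.pow_restrict _, LinearMap.restrict_apply] using
    congrArg Subtype.val this

lemma fg_shiftSpan_of_recurrence {a : ℕ → R} {L : ℕ} {c : ℕ → R}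
    (h : ∀ n, a (n + L) = ∑ i ∈ range L, c i * a (n + i)) : (shiftSpan a).FG := by
  set W := Submodule.span R ((fun k => (seqShift ^ k) a) '' Set.Iio L)
  have hW : ∀ k, (seqShift ^ k) a ∈ W := by
    intro k
    induction k using Nat.strong_induction_on with
    | h k ih =>
      rcases lt_or_ge k L with hk | hk
      · exact Submodule.subset_span ⟨k, hk, rfl⟩
      obtain ⟨m, rfl⟩ := Nat.exists_eq_add_of_le' hk
      have hsum : (seqShift ^ (m + L)) a = ∑ i ∈ range L, c i • (seqShift ^ (m + i)) a := by
        ext n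
        simp [← add_assoc, h]
      rw [hsum]
      refine Submodule.sum_mem _ fun i hi => Submodule.smul_mem _ _ <| ih _ ?_
      rw [mem_range] at hi
      omega
  have : shiftSpan a = W :=
    le_antisymm (Submodule.span_le.2 <| Set.range_subset_iff.2 hW)
      (Submodule.span_mono <| Set.image_subset_range _ _)
  rw [this]
  exact Submodule.fg_span ((Set.finite_Iio L).image _)

lemma recurrence_of_aeval_seqShift_eq_zero {a : ℕ → R} {p : R[X]} (hp : p.Monic)
    (h : aeval seqShift p a = 0) (n : ℕ) :
    a (n + p.natDegree) = ∑ i ∈ range p.natDegree, -p.coeff i * a (n + i) := by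
  have := congrFun h n
  rw [aeval_seqShift_apply, Pi.zero_apply, sum_range_succ, hp.coeff_natDegree, one_mul] at this
  simp only [neg_mul, sum_neg_distrib]
  linear_combination this

end Shift

lemma sum_Icc_one_eq_sum_range_sub {M : Type*} [AddCommMonoid M] (f : ℕ → M) (L : ℕ) :
    ∑ j ∈ Icc 1 L, f j = ∑ i ∈ range L, f (L - i) :=
  sum_nbij' (L - ·) (L - ·) (by simp only [mem_Icc, mem_range]; omega)
    (by simp only [mem_Icc, mem_range]; omega) (by simp only [mem_Icc]; omega)
    (by simp only [mem_range]; omega) fun j hj => by rw [mem_Icc] at hj; congr; omega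

lemma isCFinite_iff_exists_add_eq_sum {a : ℕ → ℂ} :
    IsCFinite a ↔ ∃ L, 0 < L ∧ ∃ c : ℕ → ℂ, ∀ n, a (n + L) = ∑ i ∈ range L, c i * a (n + i) := by
  refine exists_congr fun L => and_congr_right fun _ => ⟨?_, ?_⟩
  · rintro ⟨c, hc⟩
    refine ⟨fun i => c (L - i), fun n => ?_⟩
    rw [hc _ le_add_self, sum_Icc_one_eq_sum_range_sub]
    refine sum_congr rfl fun i hi => ?_
    rw [mem_range] at hi
    congr 2; omega
  · rintro ⟨c, hc⟩
    refine ⟨fun j => c (L - j), fun n hn => ?_⟩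
    obtain ⟨m, rfl⟩ := Nat.exists_eq_add_of_le' hn
    rw [hc, sum_Icc_one_eq_sum_range_sub]
    refine sum_congr rfl fun i hi => ?_
    rw [mem_range] at hi
    congr 2 <;> omega

lemma isCFinite_iff_fg_shiftSpan {a : ℕ → ℂ} : IsCFinite a ↔ (shiftSpan a).FG := by
  refine ⟨fun ha => ?_, fun ha => ?_⟩
  · obtain ⟨L, -, c, hc⟩ := isCFinite_iff_exists_add_eq_sum.1 ha
    exact fg_shiftSpan_of_recurrence hc
  · obtain ⟨p, hp, hpa⟩ := exists_monic_aeval_seqShift_eq_zero ha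
    -- `X * p` still annihilates `a`, and has the positive degree that `IsCFinite` demands.
    have hXp : aeval seqShift (X * p) a = 0 := by
      simp [hpa]
    refine isCFinite_iff_exists_add_eq_sum.2
      ⟨_, ?_, _, recurrence_of_aeval_seqShift_eq_zero (monic_X.mul hp) hXp⟩
    rw [natDegree_X_mul hp.ne_zero]
    omega

/-- The pointwise product of two C-finite sequences is C-finite. -/
theorem IsCFinite.mul {a b : ℕ → ℂ} (ha : IsCFinite a) (hb : IsCFinite b) :
    IsCFinite (fun n => a n * b n) := by
  rw [isCFinite_iff_fg_shiftSpan] at *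
  exact (ha.mul hb).of_le (shiftSpan_mul_le a b)
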